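/- arXiv:2409.01310 — 7 statements merged into one kernel-verified Lean document; each statement's English description precedes it below -/
import Mathlib

section
/- Let 𝒩 be a finite set of positive integers, let 𝔯 ⊆ [0,1] ∩ ℚ be a finite set with 0, 1 ∈ 𝔯, let Φ := Φ(𝔯), and let n ∈ 𝒩. Suppose b, b⁺ ∈ [0,1] are real numbers such that n·b⁺ ∈ ℤ and n·b⁺ ≥ ⌊(n+1){b_{𝒩_Φ}}⌋ + n·⌊b_{𝒩_Φ}⌋. Then n·b⁺ ≥ ⌊(n+1){b}⌋ + n·⌊b⌋. -/
open scoped BigOperators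

/-- The hyperstandard set `Φ(𝔯) = {1 - r/l | r ∈ 𝔯, l ∈ ℤ_{>0}} ∩ [0,1]` associated to a
set of rationals `𝔯`. -/
def Phi (R : Set ℚ) : Set ℝ :=
  {x : ℝ | (∃ r ∈ R, ∃ l : ℕ, 0 < l ∧ x = 1 - (r : ℝ) / l) ∧ 0 ≤ x ∧ x ≤ 1}

/-- The set `Γ(𝒩, Φ(𝔯)) = {1 - r/l + (1/l)·Σ_{n∈𝒩} m_n/(n+1)} ∩ [0,1]`. -/
def Gamma (N : Finset ℕ) (R : Set ℚ) : Set ℝ :=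
  {x : ℝ | (∃ r ∈ R, ∃ l : ℕ, 0 < l ∧ ∃ m : ℕ → ℕ,
      x = 1 - (r : ℝ) / l + (1 / (l : ℝ)) * ∑ n ∈ N, (m n : ℝ) / ((n : ℝ) + 1)) ∧
    0 ≤ x ∧ x ≤ 1}

/-!
The quantity `⌊(n+1){x}⌋ + n⌊x⌋` equals `⌊(n+1)x⌋ - ⌊(n+1)x⌋ / (n+1)` (integer division),
so it depends only on `⌊(n+1)x⌋`. Taking `r = 1`, `l = 1` and `m_n = ⌊(n+1)b⌋` shows `⌊(n+1)b⌋ / (n+1) ∈ Γ(𝒩, Φ(𝔯))`,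
so `b_{𝒩_Φ}` lies between this number and `b`, and `⌊(n+1)b_{𝒩_Φ}⌋ = ⌊(n+1)b⌋`.
-/

section FloorRing

variable {k : Type*} [Field k] [LinearOrder k] [IsStrictOrderedRing k] [FloorRing k]

lemma Int.floor_mul_fract_add_mul_floor (n : ℕ) (x : k) :
    ⌊((n : k) + 1) * Int.fract x⌋ + n * ⌊x⌋ =
      ⌊((n : k) + 1) * x⌋ - ⌊((n : k) + 1) * x⌋ / ((n : ℤ) + 1) := by
  have hx : ⌊x⌋ = ⌊((n : k) + 1) * x⌋ / ((n : ℤ) + 1) := by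
    have := Int.floor_div_natCast (((n : k) + 1) * x) (n + 1)
    push_cast at this
    rwa [mul_div_cancel_left₀ x (by positivity)] at this
  have hfract : ⌊((n : k) + 1) * Int.fract x⌋ = ⌊((n : k) + 1) * x⌋ - (n + 1) * ⌊x⌋ := by
    rw [Int.fract, mul_sub, ← Int.floor_sub_intCast]
    push_cast
    rfl
  rw [hfract, ← hx]
  ring

lemma Int.floor_mul_eq_of_floor_mul_div_le {c x y : k} (hc : 0 < c) (hyx : y ≤ x)
    (hy : ⌊c * x⌋ / c ≤ y) : ⌊c * y⌋ = ⌊c * x⌋ :=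
  le_antisymm (Int.floor_mono (mul_le_mul_of_nonneg_left hyx hc.le))
    (Int.le_floor.2 ((div_le_iff₀' hc).1 hy))

end FloorRing

lemma natCast_div_mem_Gamma {N : Finset ℕ} {R : Set ℚ} (h1R : (1 : ℚ) ∈ R) {n : ℕ}
    (hnN : n ∈ N) {j : ℕ} (hj : j ≤ n + 1) : (j : ℝ) / ((n : ℝ) + 1) ∈ Gamma N R := by
  refine ⟨⟨1, h1R, 1, one_pos, Pi.single n j, ?_⟩, by positivity, ?_⟩
  · rw [Finset.sum_eq_single_of_mem n hnN fun k _ hk => by simp [hk]]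
    simp
  · rw [div_le_one (by positivity)]
    exact_mod_cast hj

lemma floor_mul_eq_of_isGreatest_Gamma {N : Finset ℕ} {R : Set ℚ} (h1R : (1 : ℚ) ∈ R)
    {n : ℕ} (hnN : n ∈ N) {b bN : ℝ} (hb : b ∈ Set.Icc (0 : ℝ) 1)
    (hbN : IsGreatest {b' ∈ Gamma N R | b' ≤ b} bN) :
    ⌊((n : ℝ) + 1) * bN⌋ = ⌊((n : ℝ) + 1) * b⌋ := by
  have hn : (0 : ℝ) < n + 1 := by positivity
  refine Int.floor_mul_eq_of_floor_mul_div_le hn hbN.1.2 (hbN.2 ⟨?_, ?_⟩)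
  · rw [← Int.natCast_floor_eq_floor (mul_nonneg hn.le hb.1), Int.cast_natCast]
    refine natCast_div_mem_Gamma h1R hnN (Nat.floor_le_of_le ?_)
    push_cast
    nlinarith [hb.2]
  · rw [div_le_iff₀' hn]
    exact Int.floor_le _

theorem stmt1_general (N : Finset ℕ) (R : Set ℚ) (h1R : (1 : ℚ) ∈ R) (n : ℕ) (hnN : n ∈ N)
    (b bplus : ℝ) (hb : b ∈ Set.Icc (0 : ℝ) 1)
    (bN : ℝ) (hbN : IsGreatest {b' ∈ Gamma N R | b' ≤ b} bN)
    (hineq : (n : ℝ) * bplus ≥ (⌊((n : ℝ) + 1) * Int.fract bN⌋ : ℝ) + (n : ℝ) * (⌊bN⌋ : ℝ)) :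
    (n : ℝ) * bplus ≥ (⌊((n : ℝ) + 1) * Int.fract b⌋ : ℝ) + (n : ℝ) * (⌊b⌋ : ℝ) := by
  have h := Int.floor_mul_fract_add_mul_floor n b
  rw [← floor_mul_eq_of_isGreatest_Gamma h1R hnN hb hbN,
    ← Int.floor_mul_fract_add_mul_floor n bN] at h
  have hreal : ((⌊((n : ℝ) + 1) * Int.fract b⌋ : ℤ) : ℝ) + n * (⌊b⌋ : ℝ) =
      (⌊((n : ℝ) + 1) * Int.fract bN⌋ : ℝ) + n * (⌊bN⌋ : ℝ) := by
    exact_mod_cast h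
  rwa [hreal]

/-- If `n ∈ 𝒩`, `b, b⁺ ∈ [0,1]`, `n·b⁺ ∈ ℤ` and
`n·b⁺ ≥ ⌊(n+1){b_{𝒩_Φ}}⌋ + n·⌊b_{𝒩_Φ}⌋`, then `n·b⁺ ≥ ⌊(n+1){b}⌋ + n·⌊b⌋`. -/
theorem stmt1 (N : Finset ℕ) (hN : ∀ n ∈ N, 0 < n)
    (R : Set ℚ) (hRfin : R.Finite) (hRsub : R ⊆ Set.Icc 0 1)
    (h0R : (0 : ℚ) ∈ R) (h1R : (1 : ℚ) ∈ R)
    (n : ℕ) (hnN : n ∈ N)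
    (b bplus : ℝ) (hb : b ∈ Set.Icc (0 : ℝ) 1) (hbplus : bplus ∈ Set.Icc (0 : ℝ) 1)
    (hint : ∃ k : ℤ, (n : ℝ) * bplus = k)
    (bN : ℝ) (hbN : IsGreatest {b' ∈ Gamma N R | b' ≤ b} bN)
    (hineq : (n : ℝ) * bplus ≥ (⌊((n : ℝ) + 1) * Int.fract bN⌋ : ℝ) + (n : ℝ) * (⌊bN⌋ : ℝ)) :
    (n : ℝ) * bplus ≥ (⌊((n : ℝ) + 1) * Int.fract b⌋ : ℝ) + (n : ℝ) * (⌊b⌋ : ℝ) :=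
  stmt1_general N R h1R n hnN b bplus hb bN hbN hineq
end

section
/- Let 𝔯, 𝔯' ⊆ [0,1] ∩ ℚ be finite sets, each containing 0 and 1, such that Φ(𝔯) = Φ(𝔯'). Then for every finite set 𝒩 of positive integers, Γ(𝒩, Φ(𝔯)) = Γ(𝒩, Φ(𝔯')). -/
open scoped BigOperators

/-!
For `r ∈ 𝔯 ⊆ [0,1]` the number `1 - r` lies in `Φ(𝔯) = Φ(𝔯')`, so `r = r'/l'` with `r' ∈ 𝔯'`.
Then `1 - r/l + (1/l)·Σ m_n/(n+1) = 1 - r'/(l l') + (1/(l l'))·Σ l' m_n/(n+1)`, which is a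
representation of the same number over `𝔯'`; by symmetry the two sets agree.
-/

lemma one_sub_mem_Phi {R : Set ℚ} {r : ℚ} (hr : r ∈ R) (hr01 : r ∈ Set.Icc 0 1) :
    1 - (r : ℝ) ∈ Phi R := by
  have h0 : (0 : ℝ) ≤ r := by exact_mod_cast hr01.1
  have h1 : (r : ℝ) ≤ 1 := by exact_mod_cast hr01.2
  exact ⟨⟨r, hr, 1, one_pos, by simp⟩, by linarith, by linarith⟩

lemma sum_natCast_mul_div {N : Finset ℕ} (k : ℕ) (m : ℕ → ℕ) :
    ∑ n ∈ N, ((k * m n : ℕ) : ℝ) / ((n : ℝ) + 1) = k * ∑ n ∈ N, (m n : ℝ) / ((n : ℝ) + 1) := by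
  rw [Finset.mul_sum]
  refine Finset.sum_congr rfl fun n _ => ?_
  push_cast
  ring

lemma Gamma_subset_of_Phi_subset {R R' : Set ℚ} (hRsub : R ⊆ Set.Icc 0 1)
    (hPhi : Phi R ⊆ Phi R') (N : Finset ℕ) : Gamma N R ⊆ Gamma N R' := by
  rintro x ⟨⟨r, hr, l, hl, m, rfl⟩, hx0, hx1⟩
  obtain ⟨⟨r', hr', l', hl', hrr'⟩, -, -⟩ := hPhi (one_sub_mem_Phi hr (hRsub hr))
  have hr'_eq : (r' : ℝ) = r * l' := by
    field_simp at hrr'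
    linarith
  refine ⟨⟨r', hr', l * l', Nat.mul_pos hl hl', fun n => l' * m n, ?_⟩, hx0, hx1⟩
  rw [sum_natCast_mul_div, hr'_eq]
  push_cast
  field_simp

theorem stmt3_general (R R' : Set ℚ)
    (hRsub : R ⊆ Set.Icc 0 1) (hR'sub : R' ⊆ Set.Icc 0 1)
    (hPhi : Phi R = Phi R')
    (N : Finset ℕ) :
    Gamma N R = Gamma N R' :=
  (Gamma_subset_of_Phi_subset hRsub hPhi.subset N).antisymm
    (Gamma_subset_of_Phi_subset hR'sub hPhi.symm.subset N)

/-- If `Φ(𝔯) = Φ(𝔯')`, then `Γ(𝒩, Φ(𝔯)) = Γ(𝒩, Φ(𝔯'))` for every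
finite set `𝒩` of positive integers. -/
theorem stmt3 (R R' : Set ℚ) (hRfin : R.Finite) (hR'fin : R'.Finite)
    (hRsub : R ⊆ Set.Icc 0 1) (hR'sub : R' ⊆ Set.Icc 0 1)
    (h0R : (0 : ℚ) ∈ R) (h1R : (1 : ℚ) ∈ R) (h0R' : (0 : ℚ) ∈ R') (h1R' : (1 : ℚ) ∈ R')
    (hPhi : Phi R = Phi R')
    (N : Finset ℕ) (hN : ∀ n ∈ N, 0 < n) :
    Gamma N R = Gamma N R' :=
  stmt3_general R R' hRsub hR'sub hPhi N
end

section
/- Let 𝔯 ⊆ [0,1] ∩ ℚ be a finite set with 0, 1 ∈ 𝔯 and let 𝒩 be a finite set of positive integers. Define 𝔯'' := {r − Σ_{n∈𝒩} m_n/(n+1) : r ∈ 𝔯, m_n nonnegative integers} ∩ [0,1]. Then 𝔯'' is a finite subset of [0,1] ∩ ℚ and Γ(𝒩, Φ(𝔯)) = Φ(𝔯''); in particular Γ(𝒩, Φ(𝔯)) is itself a hyperstandard set. -/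
/-!
Since `1 - r/l + s/l = 1 - (r - s)/l`, every element of `Γ(𝒩, Φ(𝔯))` has the form `1 - t/l`
with `t = r - s`, where `s = Σ m_n/(n+1)`; the condition `1 - t/l ∈ [0,1]` forces `0 ≤ t`, and
`t ≤ r ≤ 1`, so `t ∈ 𝔯''`. Finiteness of `𝔯''`: `t ≥ 0` gives `s ≤ max 𝔯`, which bounds every
`m_n` and so leaves only finitely many values of `s`.
-/

open scoped BigOperators

open Finset

section FiniteSums

variable {K : Type*} [Field K] [LinearOrder K] [IsStrictOrderedRing K] [FloorSemiring K]

theorem finite_setOf_sum_natCast_div_le (N : Finset ℕ) {d : ℕ → K} (hd : ∀ n ∈ N, 0 < d n)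
    (B : K) : {s : K | ∃ m : ℕ → ℕ, s = ∑ n ∈ N, (m n : K) / d n ∧ s ≤ B}.Finite := by
  have hbox : (Set.univ.pi fun n : N => Set.Iic ⌊B * d n⌋₊).Finite :=
    Set.Finite.pi fun _ => Set.finite_Iic _
  refine (hbox.image fun m : N → ℕ => ∑ n : N, (m n : K) / d n).subset ?_
  rintro _ ⟨m, rfl, hB⟩
  refine ⟨fun n => m n, fun n _ => ?_, sum_coe_sort N fun n => (m n : K) / d n⟩
  have hterm : (m n : K) / d n ≤ B :=
    (single_le_sum (f := fun k => (m k : K) / d k)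
      (fun k hk => div_nonneg (Nat.cast_nonneg _) (hd k hk).le) n.2).trans hB
  exact Nat.le_floor ((div_le_iff₀ (hd n n.2)).mp hterm)

theorem finite_setOf_sub_sum_natCast_div_nonneg {R : Set K} (hR : R.Finite) (N : Finset ℕ)
    {d : ℕ → K} (hd : ∀ n ∈ N, 0 < d n) :
    {x : K | (∃ r ∈ R, ∃ m : ℕ → ℕ, x = r - ∑ n ∈ N, (m n : K) / d n) ∧ 0 ≤ x}.Finite := by
  obtain ⟨B, hB⟩ := hR.bddAbove
  refine (hR.image2 (· - ·) (finite_setOf_sum_natCast_div_le N hd B)).subset ?_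
  rintro _ ⟨⟨r, hr, m, rfl⟩, hx⟩
  exact ⟨r, hr, _, ⟨m, rfl, by linarith [hB hr]⟩, rfl⟩

end FiniteSums

theorem Gamma_eq_Phi_sub_sum (N : Finset ℕ) {R : Set ℚ} (hR : ∀ r ∈ R, r ≤ 1) :
    Gamma N R = Phi {x : ℚ | (∃ r ∈ R, ∃ m : ℕ → ℕ,
      x = r - ∑ n ∈ N, (m n : ℚ) / ((n : ℚ) + 1)) ∧ 0 ≤ x ∧ x ≤ 1} := by
  ext x
  constructor
  · rintro ⟨⟨r, hr, l, hl, m, rfl⟩, hx0, hx1⟩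
    have hl' : (0 : ℝ) < l := Nat.cast_pos.mpr hl
    have hsum : (0 : ℚ) ≤ ∑ n ∈ N, (m n : ℚ) / ((n : ℚ) + 1) := by positivity
    have key : 1 - (r : ℝ) / l + 1 / (l : ℝ) * ∑ n ∈ N, (m n : ℝ) / ((n : ℝ) + 1) =
        1 - ((r - ∑ n ∈ N, (m n : ℚ) / ((n : ℚ) + 1) : ℚ) : ℝ) / l := by
      push_cast
      ring
    rw [key] at hx0 hx1 ⊢
    have ht : (0 : ℝ) ≤ ((r - ∑ n ∈ N, (m n : ℚ) / ((n : ℚ) + 1) : ℚ) : ℝ) := by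
      simpa only [le_div_iff₀ hl', zero_mul] using (sub_le_self_iff _).mp hx1
    exact ⟨⟨_, ⟨⟨r, hr, m, rfl⟩, by exact_mod_cast ht, by linarith [hR r hr]⟩, l, hl, rfl⟩,
      hx0, hx1⟩
  · rintro ⟨⟨_, ⟨⟨r, hr, m, rfl⟩, -, -⟩, l, hl, rfl⟩, hx0, hx1⟩
    exact ⟨⟨r, hr, l, hl, m, by push_cast; ring⟩, hx0, hx1⟩

theorem stmt4_general (R : Set ℚ) (hRfin : R.Finite) (hRsub : R ⊆ Set.Icc 0 1)
    (N : Finset ℕ)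
    (R'' : Set ℚ)
    (hR'' : R'' = {x : ℚ | (∃ r ∈ R, ∃ m : ℕ → ℕ,
      x = r - ∑ n ∈ N, (m n : ℚ) / ((n : ℚ) + 1)) ∧ 0 ≤ x ∧ x ≤ 1}) :
    R''.Finite ∧ R'' ⊆ Set.Icc 0 1 ∧ Gamma N R = Phi R'' ∧
      ∃ R₀ : Set ℚ, R₀.Finite ∧ R₀ ⊆ Set.Icc 0 1 ∧ Gamma N R = Phi R₀ := by
  have hfin : R''.Finite := hR'' ▸ (finite_setOf_sub_sum_natCast_div_nonneg hRfin N
    fun n _ => n.cast_add_one_pos).subset fun _ hx => ⟨hx.1, hx.2.1⟩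
  have hsub : R'' ⊆ Set.Icc 0 1 := hR'' ▸ fun _ hx => hx.2
  have heq : Gamma N R = Phi R'' := hR'' ▸ Gamma_eq_Phi_sub_sum N fun r hr => (hRsub hr).2
  exact ⟨hfin, hsub, heq, R'', hfin, hsub, heq⟩

/-- With `𝔯'' := {r − Σ_{n∈𝒩} m_n/(n+1) : r ∈ 𝔯, m_n ∈ ℤ_{≥0}} ∩ [0,1]`,
the set `𝔯''` is a finite subset of `[0,1] ∩ ℚ` and `Γ(𝒩, Φ(𝔯)) = Φ(𝔯'')`;
in particular `Γ(𝒩, Φ(𝔯))` is a hyperstandard set. -/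
theorem stmt4 (R : Set ℚ) (hRfin : R.Finite) (hRsub : R ⊆ Set.Icc 0 1)
    (h0R : (0 : ℚ) ∈ R) (h1R : (1 : ℚ) ∈ R)
    (N : Finset ℕ) (hN : ∀ n ∈ N, 0 < n)
    (R'' : Set ℚ)
    (hR'' : R'' = {x : ℚ | (∃ r ∈ R, ∃ m : ℕ → ℕ,
      x = r - ∑ n ∈ N, (m n : ℚ) / ((n : ℚ) + 1)) ∧ 0 ≤ x ∧ x ≤ 1}) :
    R''.Finite ∧ R'' ⊆ Set.Icc 0 1 ∧ Gamma N R = Phi R'' ∧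
      ∃ R₀ : Set ℚ, R₀.Finite ∧ R₀ ⊆ Set.Icc 0 1 ∧ Gamma N R = Phi R₀ :=
  stmt4_general R hRfin hRsub N R'' hR''
end

section
/- Let 𝔯 ⊆ [0,1] ∩ ℚ be a finite set with 0, 1 ∈ 𝔯, let Φ := Φ(𝔯), and let 𝒩₁ and 𝒩₂ be finite sets of positive integers. Let 𝔯₁ := {r − Σ_{n∈𝒩₁} m_n/(n+1) : r ∈ 𝔯, m_n nonnegative integers} ∩ [0,1], so that Γ(𝒩₁, Φ) = Φ(𝔯₁). Then Γ(𝒩₁ ∪ 𝒩₂, Φ) = Γ(𝒩₂, Φ(𝔯₁)), i.e. Γ(𝒩₁ ∪ 𝒩₂, Φ) = Γ(𝒩₂, Γ(𝒩₁, Φ)). -/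
/-!
Write `S(𝒩)` for the set of sums `Σ_{n∈𝒩} m_n/(n+1)`. Splitting the multiplicities gives
`S(𝒩₁ ∪ 𝒩₂) = S(𝒩₁) + S(𝒩₂)`, so an element `x = 1 - r/l + (s₁ + s₂)/l` of the left side
is `1 - (r - s₁)/l + s₂/l`. The only point is that `r - s₁` lies in `𝔯₁`, i.e. in `[0,1]`:
it is at most `r ≤ 1`, and `x ≤ 1` forces `s₁ + s₂ ≤ r`, hence `r - s₁ ≥ s₂ ≥ 0`.
-/

open scoped BigOperators

open scoped Pointwise

theorem Finset.range_sum_nsmul_union {α M : Type*} [DecidableEq α] [AddCommMonoid M]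
    (N₁ N₂ : Finset α) (w : α → M) :
    Set.range (fun m : α → ℕ => ∑ n ∈ N₁ ∪ N₂, m n • w n) =
      Set.range (fun m : α → ℕ => ∑ n ∈ N₁, m n • w n) +
        Set.range (fun m : α → ℕ => ∑ n ∈ N₂, m n • w n) := by
  ext x
  simp only [Set.mem_add, Set.mem_range]
  constructor
  · rintro ⟨m, rfl⟩
    refine ⟨_, ⟨fun n => if n ∉ N₂ then m n else 0, rfl⟩, _, ⟨m, rfl⟩, ?_⟩
    rw [← Finset.sdiff_union_self_eq_union, Finset.sum_union Finset.sdiff_disjoint,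
      Finset.sdiff_eq_filter, Finset.sum_filter]
    simp only [ite_smul, zero_smul]
  · rintro ⟨_, ⟨m₁, rfl⟩, _, ⟨m₂, rfl⟩, rfl⟩
    refine ⟨fun n => (if n ∈ N₁ then m₁ n else 0) + (if n ∈ N₂ then m₂ n else 0), ?_⟩
    simp only [add_smul, ite_smul, zero_smul, Finset.sum_add_distrib, Finset.sum_ite_mem,
      Finset.union_inter_cancel_left, Finset.union_inter_cancel_right]

def unitFractionSums (K : Type*) [DivisionSemiring K] (N : Finset ℕ) : Set K :=
  Set.range fun m : ℕ → ℕ => ∑ n ∈ N, (m n : K) / ((n : K) + 1)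

section unitFractionSums

variable {K : Type*}

theorem unitFractionSums_union [DivisionSemiring K] (N₁ N₂ : Finset ℕ) :
    unitFractionSums K (N₁ ∪ N₂) = unitFractionSums K N₁ + unitFractionSums K N₂ := by
  simpa only [unitFractionSums, nsmul_eq_mul, div_eq_mul_inv]
    using Finset.range_sum_nsmul_union N₁ N₂ fun n => ((n : K) + 1)⁻¹

theorem nonneg_of_mem_unitFractionSums [Semifield K] [LinearOrder K] [IsStrictOrderedRing K]
    {N : Finset ℕ} {s : K} (hs : s ∈ unitFractionSums K N) : 0 ≤ s := by
  obtain ⟨m, rfl⟩ := hs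
  positivity

theorem unitFractionSums_eq_image_ratCast [DivisionRing K] [CharZero K] (N : Finset ℕ) :
    unitFractionSums K N = Rat.cast '' unitFractionSums ℚ N := by
  rw [unitFractionSums, unitFractionSums, ← Set.range_comp]
  congr! with m
  simp [Function.comp_apply, Rat.cast_sum, Rat.cast_div]

end unitFractionSums

theorem mem_Gamma_iff {N : Finset ℕ} {R : Set ℚ} {x : ℝ} :
    x ∈ Gamma N R ↔ (∃ r ∈ R, ∃ l : ℕ, 0 < l ∧ ∃ s ∈ unitFractionSums ℝ N,
      x = 1 - (r : ℝ) / l + (1 / (l : ℝ)) * s) ∧ 0 ≤ x ∧ x ≤ 1 := by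
  simp [Gamma, unitFractionSums]

theorem stmt5_general (R : Set ℚ) (hRsub : R ⊆ Set.Icc 0 1)
    (N₁ N₂ : Finset ℕ)
    (R₁ : Set ℚ)
    (hR₁ : R₁ = {x : ℚ | (∃ r ∈ R, ∃ m : ℕ → ℕ,
      x = r - ∑ n ∈ N₁, (m n : ℚ) / ((n : ℚ) + 1)) ∧ 0 ≤ x ∧ x ≤ 1}) :
    Gamma (N₁ ∪ N₂) R = Gamma N₂ R₁ := by
  have mem_R₁ : ∀ q, q ∈ R₁ ↔
      (∃ r ∈ R, ∃ s ∈ unitFractionSums ℚ N₁, q = r - s) ∧ 0 ≤ q ∧ q ≤ 1 := by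
    simp [hR₁, unitFractionSums]
  ext x
  simp only [mem_Gamma_iff, unitFractionSums_union, Set.mem_add,
    unitFractionSums_eq_image_ratCast (K := ℝ) N₁, Set.mem_image]
  constructor
  · rintro ⟨⟨r, hr, l, hl, _, ⟨_, ⟨s₁, hs₁, rfl⟩, s₂, hs₂, rfl⟩, rfl⟩, hx0, hx1⟩
    have hs : (s₁ : ℝ) + s₂ ≤ r := by
      rw [← one_div_mul_eq_div] at hx1
      exact le_of_mul_le_mul_left (by linarith) (by positivity : (0 : ℝ) < 1 / l)
    have hs₂0 := nonneg_of_mem_unitFractionSums hs₂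
    have hs₁0 := nonneg_of_mem_unitFractionSums hs₁
    have hr1 := (hRsub hr).2
    refine ⟨⟨r - s₁, (mem_R₁ _).2 ⟨⟨r, hr, s₁, hs₁, rfl⟩, ?_, ?_⟩, l, hl, s₂, hs₂, ?_⟩, hx0, hx1⟩
    · exact_mod_cast (by linarith : (0 : ℝ) ≤ r - s₁)
    · linarith
    · push_cast; ring
  · rintro ⟨⟨r₁, hr₁, l, hl, s₂, hs₂, rfl⟩, hx0, hx1⟩
    obtain ⟨⟨r, hr, s₁, hs₁, rfl⟩, -, -⟩ := (mem_R₁ r₁).1 hr₁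
    exact ⟨⟨r, hr, l, hl, s₁ + s₂, ⟨s₁, ⟨s₁, hs₁, rfl⟩, s₂, hs₂, rfl⟩, by push_cast; ring⟩,
      hx0, hx1⟩

/-- With `𝔯₁ := {r − Σ_{n∈𝒩₁} m_n/(n+1) : r ∈ 𝔯, m_n ∈ ℤ_{≥0}} ∩ [0,1]`
(so that `Γ(𝒩₁, Φ) = Φ(𝔯₁)`), one has `Γ(𝒩₁ ∪ 𝒩₂, Φ) = Γ(𝒩₂, Φ(𝔯₁))`, i.e.
`Γ(𝒩₁ ∪ 𝒩₂, Φ) = Γ(𝒩₂, Γ(𝒩₁, Φ))`. -/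
theorem stmt5 (R : Set ℚ) (hRfin : R.Finite) (hRsub : R ⊆ Set.Icc 0 1)
    (h0R : (0 : ℚ) ∈ R) (h1R : (1 : ℚ) ∈ R)
    (N₁ N₂ : Finset ℕ) (hN₁ : ∀ n ∈ N₁, 0 < n) (hN₂ : ∀ n ∈ N₂, 0 < n)
    (R₁ : Set ℚ)
    (hR₁ : R₁ = {x : ℚ | (∃ r ∈ R, ∃ m : ℕ → ℕ,
      x = r - ∑ n ∈ N₁, (m n : ℚ) / ((n : ℚ) + 1)) ∧ 0 ≤ x ∧ x ≤ 1}) :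
    Gamma (N₁ ∪ N₂) R = Gamma N₂ R₁ :=
  stmt5_general R hRsub N₁ N₂ R₁ hR₁
end

section
/- Let 𝔯 ⊆ [0,1] ∩ ℚ be a finite set with 0, 1 ∈ 𝔯 and let 𝒩 be a finite set of positive integers. Then for every real number b ∈ [0,1], the set {b' ∈ Γ(𝒩, Φ(𝔯)) : b' ≤ b} is nonempty and has a greatest element; in particular b_{𝒩_Φ} is well defined. -/
open scoped BigOperators

/-!
Every element of `Γ(𝒩, Φ(𝔯))` has the form `1 - q/l` with `q = r - Σ m_n/(n+1)` a rational
number at most `1` whose denominator divides a fixed common denominator `K` of `𝔯` and of the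
`n + 1`. For `b < 1` the bound `1 - q/l ≤ b` forces `q > 0` and `l ≤ 1/(1 - b)`, so only
finitely many pairs `(q, l)` occur and `{b' ∈ Γ | b' ≤ b}` is finite. For `b ≥ 1` the greatest
element is `1 = 1 - 0/1`.
-/

lemma Rat.mem_zmultiples_inv_of_den_dvd {q : ℚ} {K : ℕ} (hK : K ≠ 0) (h : q.den ∣ K) :
    q ∈ AddSubgroup.zmultiples (K : ℚ)⁻¹ := by
  obtain ⟨c, rfl⟩ := h
  have hc : (c : ℚ) ≠ 0 := by exact_mod_cast right_ne_zero_of_mul hK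
  refine ⟨q.num * c, ?_⟩
  dsimp only
  rw [zsmul_eq_mul]
  push_cast
  field_simp
  exact (Rat.den_mul_eq_num q).symm

lemma AddSubgroup.finite_zmultiples_inter_Icc {α : Type*} [Field α] [LinearOrder α]
    [IsStrictOrderedRing α] [FloorRing α] {a : α} (ha : 0 < a) (u v : α) :
    (AddSubgroup.zmultiples a ∩ Set.Icc u v : Set α).Finite := by
  refine ((Set.finite_Icc ⌈u / a⌉ ⌊v / a⌋).image fun k : ℤ => k • a).subset ?_
  rintro _ ⟨⟨k, rfl⟩, hu, hv⟩
  refine ⟨k, ⟨Int.ceil_le.mpr ?_, Int.le_floor.mpr ?_⟩, rfl⟩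
  · rwa [div_le_iff₀ ha, ← zsmul_eq_mul]
  · rwa [le_div_iff₀ ha, ← zsmul_eq_mul]

lemma Set.Finite.exists_common_den {R : Set ℚ} (hR : R.Finite) (N : Finset ℕ) :
    ∃ K : ℕ, K ≠ 0 ∧ (∀ r ∈ R, r.den ∣ K) ∧ ∀ n ∈ N, n + 1 ∣ K := by
  refine ⟨(∏ r ∈ hR.toFinset, r.den) * ∏ n ∈ N, (n + 1), ?_, fun r hr => ?_, fun n hn => ?_⟩
  · exact mul_ne_zero (Finset.prod_ne_zero_iff.mpr fun r _ => r.den_ne_zero)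
      (Finset.prod_ne_zero_iff.mpr fun n _ => n.succ_ne_zero)
  · exact (Finset.dvd_prod_of_mem _ (hR.mem_toFinset.mpr hr)).mul_right _
  · exact (Finset.dvd_prod_of_mem _ hn).mul_left _

lemma exists_eq_one_sub_div_of_mem_Gamma {N : Finset ℕ} {R : Set ℚ} {K : ℕ} (hK : K ≠ 0)
    (hRK : ∀ r ∈ R, r.den ∣ K) (hNK : ∀ n ∈ N, n + 1 ∣ K) (hR1 : ∀ r ∈ R, r ≤ 1)
    {x : ℝ} (hx : x ∈ Gamma N R) :
    ∃ q ∈ AddSubgroup.zmultiples (K : ℚ)⁻¹, q ≤ 1 ∧ ∃ l : ℕ, 0 < l ∧ x = 1 - q / l := by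
  obtain ⟨⟨r, hr, l, hl, m, rfl⟩, -⟩ := hx
  set s : ℚ := ∑ n ∈ N, (m n : ℚ) / ((n : ℚ) + 1)
  have hs : s ∈ AddSubgroup.zmultiples (K : ℚ)⁻¹ := by
    refine AddSubgroup.sum_mem _ fun n hn => ?_
    have hinv : ((n + 1 : ℕ) : ℚ)⁻¹.den = n + 1 := Rat.inv_natCast_den_of_pos n.succ_pos
    have := AddSubgroup.nsmul_mem _ (Rat.mem_zmultiples_inv_of_den_dvd hK (hinv ▸ hNK n hn)) (m n)
    simpa [nsmul_eq_mul, div_eq_mul_inv] using this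
  have hs0 : 0 ≤ s := Finset.sum_nonneg fun n _ => by positivity
  refine ⟨r - s, sub_mem (Rat.mem_zmultiples_inv_of_den_dvd hK (hRK r hr)) hs,
    by linarith [hR1 r hr], l, hl, ?_⟩
  push_cast [s]
  ring

lemma finite_Gamma_inter_Iic {R : Set ℚ} (hR : R.Finite) (hR1 : ∀ r ∈ R, r ≤ 1)
    (N : Finset ℕ) {b : ℝ} (hb : b < 1) :
    {x ∈ Gamma N R | x ≤ b}.Finite := by
  obtain ⟨K, hK, hRK, hNK⟩ := hR.exists_common_den N
  have hQ := AddSubgroup.finite_zmultiples_inter_Icc (a := (K : ℚ)⁻¹) (by positivity) 0 1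
  refine (hQ.image2 (fun (q : ℚ) (l : ℕ) => 1 - (q : ℝ) / l)
    (Set.finite_Iic ⌊1 / (1 - b)⌋₊)).subset ?_
  rintro x ⟨hx, hxb⟩
  obtain ⟨q, hqK, hq1, l, hl, rfl⟩ := exists_eq_one_sub_div_of_mem_Gamma hK hRK hNK hR1 hx
  have hl' : (0 : ℝ) < l := by exact_mod_cast hl
  have hqb : (l : ℝ) * (1 - b) ≤ q := by
    rw [← le_div_iff₀' hl']
    linarith
  have hq0 : (0 : ℝ) ≤ q := le_trans (by nlinarith) hqb
  refine ⟨q, ⟨hqK, by exact_mod_cast hq0, hq1⟩, l, Nat.le_floor ?_, rfl⟩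
  rw [le_div_iff₀ (by linarith)]
  exact hqb.trans (by exact_mod_cast hq1)

lemma zero_mem_Gamma {R : Set ℚ} (h1R : (1 : ℚ) ∈ R) (N : Finset ℕ) : (0 : ℝ) ∈ Gamma N R :=
  ⟨⟨1, h1R, 1, one_pos, fun _ => 0, by norm_num⟩, le_rfl, zero_le_one⟩

lemma one_mem_Gamma {R : Set ℚ} (h0R : (0 : ℚ) ∈ R) (N : Finset ℕ) : (1 : ℝ) ∈ Gamma N R :=
  ⟨⟨0, h0R, 1, one_pos, fun _ => 0, by norm_num⟩, zero_le_one, le_rfl⟩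

theorem stmt7_general (R : Set ℚ) (hRfin : R.Finite) (hRsub : R ⊆ Set.Icc 0 1)
    (h0R : (0 : ℚ) ∈ R) (h1R : (1 : ℚ) ∈ R)
    (N : Finset ℕ)
    (b : ℝ) (hb : b ∈ Set.Icc (0 : ℝ) 1) :
    {b' ∈ Gamma N R | b' ≤ b}.Nonempty ∧
      ∃ bn : ℝ, IsGreatest {b' ∈ Gamma N R | b' ≤ b} bn := by
  have hne : {b' ∈ Gamma N R | b' ≤ b}.Nonempty := ⟨0, zero_mem_Gamma h1R N, hb.1⟩
  refine ⟨hne, ?_⟩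
  rcases le_or_gt 1 b with h1b | hb1
  · exact ⟨1, ⟨one_mem_Gamma h0R N, h1b⟩, fun x hx => hx.1.2.2⟩
  · obtain ⟨bn, hbn, hmax⟩ := Set.exists_max_image _ id
      (finite_Gamma_inter_Iic hRfin (fun r hr => (hRsub hr).2) N hb1) hne
    exact ⟨bn, hbn, hmax⟩

/-- For every `b ∈ [0,1]`, the set `{b' ∈ Γ(𝒩, Φ(𝔯)) : b' ≤ b}` is nonempty
and has a greatest element, so `b_{𝒩_Φ}` is well defined. -/
theorem stmt7 (R : Set ℚ) (hRfin : R.Finite) (hRsub : R ⊆ Set.Icc 0 1)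
    (h0R : (0 : ℚ) ∈ R) (h1R : (1 : ℚ) ∈ R)
    (N : Finset ℕ) (hN : ∀ n ∈ N, 0 < n)
    (b : ℝ) (hb : b ∈ Set.Icc (0 : ℝ) 1) :
    {b' ∈ Gamma N R | b' ≤ b}.Nonempty ∧
      ∃ bn : ℝ, IsGreatest {b' ∈ Gamma N R | b' ≤ b} bn :=
  stmt7_general R hRfin hRsub h0R h1R N b hb
end

section
/- Let l be a positive integer. Then there exists a finite set 𝒩'' of positive integers, each divisible by l, depending only on l, satisfying the following: for any positive integer k and any sequences a₁,…,a_k and b₁,…,b_k of non-negative real numbers with Σ_{i=1}^{k} a_i ≤ 1 and Σ_{i=1}^{k} b_i ≤ 1, there exist n ∈ 𝒩'', an integer k' ≥ k, and non-negative real numbers a₁⁺,…,a_{k'}⁺ and b₁⁺,…,b_{k'}⁺ such that (1) Σ_{i=1}^{k'} a_i⁺ = Σ_{i=1}^{k'} b_i⁺ = 1, and (2) n·a_i⁺ ≥ n·⌊a_i⌋ + ⌊(n+1){a_i}⌋ and n·b_i⁺ ≥ n·⌊b_i⌋ + ⌊(n+1){b_i}⌋ for every 1 ≤ i ≤ k.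 -/
/-!
Write `r n x := n⌊x⌋ + ⌊(n+1){x}⌋ = ⌊(n+1)x⌋ - ⌊x⌋`. Given `n` with `∑ r n (xᵢ) ≤ n`, the
values `r n (xᵢ) / n` can be padded by one extra term to a sequence summing to `1`. If instead
`∑ r n (xᵢ) > n`, then `∑ ⌊(n+1)xᵢ⌋ ≥ n + 1 ≥ (n+1) ∑ xᵢ` forces every `(n+1)xᵢ` to be an
integer; for `n'` with `n' + 1` coprime to `n + 1`, the positive `xᵢ` then make `(n'+1)xᵢ`
non-integral (or `⌊xᵢ⌋ = 1`), so `∑ r n' (xᵢ) ≤ n'`. Hence each sequence fails for at most one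
of `l`, `l(l+1)`, `l(l+1)(l(l+1)+1)`, whose successors are pairwise coprime, and one of the
three works for both `a` and `b`.
-/

open Finset

noncomputable def roundDown (n : ℕ) (x : ℝ) : ℤ :=
  n * ⌊x⌋ + ⌊((n : ℝ) + 1) * Int.fract x⌋

lemma roundDown_eq (n : ℕ) (x : ℝ) : roundDown n x = ⌊((n : ℝ) + 1) * x⌋ - ⌊x⌋ := by
  have h : ((n : ℝ) + 1) * x = ((((n + 1) * ⌊x⌋ : ℤ)) : ℝ) + ((n : ℝ) + 1) * Int.fract x := by
    rw [Int.fract]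
    push_cast
    ring
  rw [roundDown, h, Int.floor_intCast_add]
  ring

lemma roundDown_nonneg (n : ℕ) {x : ℝ} (hx : 0 ≤ x) : 0 ≤ roundDown n x := by
  rw [roundDown_eq, sub_nonneg]
  exact Int.floor_mono (le_mul_of_one_le_left hx (by simp))

lemma Nat.coprime_add_one_of_dvd {d m : ℕ} (h : d ∣ m) : Nat.Coprime d (m + 1) := by
  obtain ⟨q, rfl⟩ := h
  rw [add_comm]
  exact (Nat.coprime_add_mul_left_right d 1 q).2 (Nat.coprime_one_right d)

section Rigidity

variable {ι : Type*} {s : Finset ι} {x : ι → ℝ} {m m' : ℕ}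

lemma floor_mul_eq_of_le_sum_floor (hs : ∑ i ∈ s, x i ≤ 1)
    (hm : (m : ℤ) ≤ ∑ i ∈ s, ⌊(m : ℝ) * x i⌋) : ∀ i ∈ s, (⌊(m : ℝ) * x i⌋ : ℝ) = m * x i := by
  have hle : ∀ i ∈ s, (⌊(m : ℝ) * x i⌋ : ℝ) ≤ m * x i := fun i _ => Int.floor_le _
  refine (sum_eq_sum_iff_of_le hle).1 (le_antisymm (sum_le_sum hle) ?_)
  calc ∑ i ∈ s, (m : ℝ) * x i = m * ∑ i ∈ s, x i := (mul_sum _ _ _).symm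
    _ ≤ m := mul_le_of_le_one_right m.cast_nonneg hs
    _ ≤ ∑ i ∈ s, (⌊(m : ℝ) * x i⌋ : ℝ) := by exact_mod_cast hm

/-- If `m y = c` with `0 < c < m`, then `m' y = m' c / m` is not an integer since `m ∤ m' c`. -/
lemma floor_mul_lt_of_coprime (hcop : m.Coprime m') (hm : 0 < m) {y : ℝ} (hy0 : 0 < y)
    (hy1 : y < 1) (hmy : (⌊(m : ℝ) * y⌋ : ℝ) = m * y) : (⌊(m' : ℝ) * y⌋ : ℝ) < m' * y := by
  refine (Int.floor_le _).lt_of_ne fun hm'y => ?_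
  set c := ⌊(m : ℝ) * y⌋
  have hreal : (m' : ℝ) * c = m * ⌊(m' : ℝ) * y⌋ := by rw [hmy, hm'y]; ring
  have hdvd : (m : ℤ) ∣ m' * c := ⟨_, by exact_mod_cast hreal⟩
  have hc_dvd : (m : ℤ) ∣ c := (Nat.isCoprime_iff_coprime.2 hcop).dvd_of_dvd_mul_left hdvd
  have hc_pos : 0 < c := by
    have : (0 : ℝ) < c := by rw [hmy]; positivity
    exact_mod_cast this
  have hc_lt : c < m := by
    have : (c : ℝ) < m := by rw [hmy]; exact mul_lt_of_lt_one_right (by exact_mod_cast hm) hy1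
    exact_mod_cast this
  have := Int.le_of_dvd hc_pos hc_dvd
  omega

lemma floor_mul_sub_floor_lt_of_coprime (hcop : m.Coprime m') (hm : 0 < m) {y : ℝ} (hy : 0 < y)
    (hmy : (⌊(m : ℝ) * y⌋ : ℝ) = m * y) : (⌊(m' : ℝ) * y⌋ - ⌊y⌋ : ℝ) < m' * y := by
  rcases lt_or_ge y 1 with hy1 | hy1
  · rw [Int.floor_eq_zero_iff.2 ⟨hy.le, hy1⟩, Int.cast_zero, sub_zero]
    exact floor_mul_lt_of_coprime hcop hm hy hy1 hmy
  · have : (1 : ℝ) ≤ ⌊y⌋ := by exact_mod_cast Int.le_floor.2 (by simpa using hy1)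
    linarith [Int.floor_le ((m' : ℝ) * y)]

lemma sum_floor_mul_sub_floor_lt_of_coprime (hcop : m.Coprime m') (hm : 0 < m)
    (hx : ∀ i ∈ s, 0 ≤ x i) (hs : ∑ i ∈ s, x i ≤ 1)
    (hbad : (m : ℤ) ≤ ∑ i ∈ s, (⌊(m : ℝ) * x i⌋ - ⌊x i⌋)) :
    ∑ i ∈ s, (⌊(m' : ℝ) * x i⌋ - ⌊x i⌋) < (m' : ℤ) := by
  have hbad' : (m : ℤ) ≤ ∑ i ∈ s, ⌊(m : ℝ) * x i⌋ :=
    hbad.trans (sum_le_sum fun i hi => sub_le_self _ (Int.floor_nonneg.2 (hx i hi)))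
  have hexact := floor_mul_eq_of_le_sum_floor hs hbad'
  obtain ⟨i₀, hi₀, hpos⟩ : ∃ i ∈ s, 0 < x i := by
    by_contra! h
    have hzero : ∑ i ∈ s, ⌊(m : ℝ) * x i⌋ = 0 :=
      sum_eq_zero fun i hi => by simp [le_antisymm (h i hi) (hx i hi)]
    omega
  have hlt : (∑ i ∈ s, (⌊(m' : ℝ) * x i⌋ - ⌊x i⌋ : ℤ) : ℝ) < ∑ i ∈ s, (m' : ℝ) * x i := by
    push_cast
    refine sum_lt_sum (fun i hi => ?_)
      ⟨i₀, hi₀, floor_mul_sub_floor_lt_of_coprime hcop hm hpos (hexact i₀ hi₀)⟩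
    have : (0 : ℝ) ≤ ⌊x i⌋ := by exact_mod_cast Int.floor_nonneg.2 (hx i hi)
    linarith [Int.floor_le ((m' : ℝ) * x i)]
  have : (∑ i ∈ s, (⌊(m' : ℝ) * x i⌋ - ⌊x i⌋ : ℤ) : ℝ) < m' := by
    rw [← mul_sum] at hlt
    exact hlt.trans_le (mul_le_of_le_one_right m'.cast_nonneg hs)
  exact_mod_cast this

lemma sum_roundDown_le_or {n n' : ℕ} (hcop : (n + 1).Coprime (n' + 1))
    (hx : ∀ i ∈ s, 0 ≤ x i) (hs : ∑ i ∈ s, x i ≤ 1) :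
    ∑ i ∈ s, roundDown n (x i) ≤ n ∨ ∑ i ∈ s, roundDown n' (x i) ≤ n' := by
  simp only [roundDown_eq]
  refine or_iff_not_imp_left.2 fun hbad => ?_
  have := sum_floor_mul_sub_floor_lt_of_coprime hcop n.succ_pos hx hs
    (by push_cast; omega)
  push_cast at this
  omega

end Rigidity

lemma exists_extension_sum_eq_one {k : ℕ} {y : ℕ → ℝ} (hy : ∀ i, 0 ≤ y i)
    (hs : ∑ i ∈ range k, y i ≤ 1) :
    ∃ y' : ℕ → ℝ, (∀ i, 0 ≤ y' i) ∧ ∑ i ∈ range (k + 1), y' i = 1 ∧ ∀ i < k, y' i = y i := by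
  refine ⟨Function.update y k (1 - ∑ i ∈ range k, y i), fun i => ?_, ?_, fun i hi => ?_⟩
  · rcases eq_or_ne i k with rfl | hi
    · simpa using hs
    · simpa [hi] using hy i
  · rw [sum_range_succ, Function.update_self,
      sum_congr rfl fun i hi => Function.update_of_ne (mem_range.1 hi).ne _ _]
    ring
  · exact Function.update_of_ne hi.ne _ _

lemma exists_extension_of_sum_roundDown_le {k n : ℕ} (hn : 0 < n) {x : ℕ → ℝ}
    (hx : ∀ i, 0 ≤ x i) (h : ∑ i ∈ range k, roundDown n (x i) ≤ n) :
    ∃ x' : ℕ → ℝ, (∀ i, 0 ≤ x' i) ∧ ∑ i ∈ range (k + 1), x' i = 1 ∧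
      ∀ i < k, (n : ℝ) * x' i = n * ⌊x i⌋ + ⌊((n : ℝ) + 1) * Int.fract (x i)⌋ := by
  have hnR : (0 : ℝ) < n := by exact_mod_cast hn
  obtain ⟨x', hx'0, hx'1, hx'⟩ := exists_extension_sum_eq_one (k := k)
    (y := fun i => (roundDown n (x i) : ℝ) / n)
    (fun i => div_nonneg (by exact_mod_cast roundDown_nonneg n (hx i)) hnR.le)
    (by rw [← sum_div, div_le_one hnR]; exact_mod_cast h)
  refine ⟨x', hx'0, hx'1, fun i hi => ?_⟩
  rw [hx' i hi, mul_div_cancel₀ _ hnR.ne', roundDown]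
  push_cast
  rfl

lemma exists_mem_of_two_of_three {P Q : ℕ → Prop} {n₁ n₂ n₃ : ℕ}
    (hP : (P n₁ ∨ P n₂) ∧ (P n₁ ∨ P n₃) ∧ (P n₂ ∨ P n₃))
    (hQ : (Q n₁ ∨ Q n₂) ∧ (Q n₁ ∨ Q n₃) ∧ (Q n₂ ∨ Q n₃)) :
    ∃ n ∈ ({n₁, n₂, n₃} : Finset ℕ), P n ∧ Q n := by
  simp only [mem_insert, mem_singleton, exists_eq_or_imp, exists_eq_left]
  tauto

/-- For every positive integer `l` there is a finite set `𝒩''` of positive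
integers divisible by `l` such that: for any two finite sequences of non-negative reals
`a₁,…,a_k` and `b₁,…,b_k` with `Σ aᵢ ≤ 1` and `Σ bᵢ ≤ 1`, there are `n ∈ 𝒩''`, `k' ≥ k` and
non-negative reals `a₁⁺,…,a_{k'}⁺`, `b₁⁺,…,b_{k'}⁺` with `Σ aᵢ⁺ = Σ bᵢ⁺ = 1`,
`n·aᵢ⁺ ≥ n·⌊aᵢ⌋ + ⌊(n+1){aᵢ}⌋` and `n·bᵢ⁺ ≥ n·⌊bᵢ⌋ + ⌊(n+1){bᵢ}⌋` for all `1 ≤ i ≤ k`. -/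
theorem stmt8 (l : ℕ) (hl : 0 < l) :
    ∃ N : Finset ℕ, (∀ n ∈ N, 0 < n ∧ l ∣ n) ∧
      ∀ (k : ℕ), 0 < k → ∀ (a b : ℕ → ℝ),
        (∀ i, 0 ≤ a i) → (∀ i, 0 ≤ b i) →
        (∑ i ∈ Finset.range k, a i) ≤ 1 → (∑ i ∈ Finset.range k, b i) ≤ 1 →
        ∃ n ∈ N, ∃ k' : ℕ, k ≤ k' ∧ ∃ a' b' : ℕ → ℝ,
          (∀ i, 0 ≤ a' i) ∧ (∀ i, 0 ≤ b' i) ∧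
          (∑ i ∈ Finset.range k', a' i) = 1 ∧ (∑ i ∈ Finset.range k', b' i) = 1 ∧
          (∀ i < k,
            (n : ℝ) * a' i ≥ (n : ℝ) * (⌊a i⌋ : ℝ) + (⌊((n : ℝ) + 1) * Int.fract (a i)⌋ : ℝ) ∧
            (n : ℝ) * b' i ≥ (n : ℝ) * (⌊b i⌋ : ℝ) + (⌊((n : ℝ) + 1) * Int.fract (b i)⌋ : ℝ)) := by
  set n₂ := l * (l + 1)
  set n₃ := n₂ * (n₂ + 1)
  have h₁₂ : (l + 1).Coprime (n₂ + 1) := Nat.coprime_add_one_of_dvd (dvd_mul_left _ _)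
  have h₁₃ : (l + 1).Coprime (n₃ + 1) :=
    Nat.coprime_add_one_of_dvd ((dvd_mul_left _ _).mul_right _)
  have h₂₃ : (n₂ + 1).Coprime (n₃ + 1) := Nat.coprime_add_one_of_dvd (dvd_mul_left _ _)
  refine ⟨{l, n₂, n₃}, ?_, fun k _ a b ha hb hsa hsb => ?_⟩
  · simp only [mem_insert, mem_singleton]
    rintro n (rfl | rfl | rfl)
    exacts [⟨hl, dvd_rfl⟩, ⟨by positivity, dvd_mul_right _ _⟩,
      ⟨by positivity, (dvd_mul_right _ _).mul_right _⟩]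
  let good (x : ℕ → ℝ) (n : ℕ) : Prop := ∑ i ∈ range k, roundDown n (x i) ≤ n
  have hgood : ∀ x : ℕ → ℝ, (∀ i, 0 ≤ x i) → ∑ i ∈ range k, x i ≤ 1 →
      (good x l ∨ good x n₂) ∧ (good x l ∨ good x n₃) ∧ (good x n₂ ∨ good x n₃) := fun x hx hs =>
    ⟨sum_roundDown_le_or h₁₂ (fun i _ => hx i) hs, sum_roundDown_le_or h₁₃ (fun i _ => hx i) hs,
      sum_roundDown_le_or h₂₃ (fun i _ => hx i) hs⟩
  obtain ⟨n, hnN, hna, hnb⟩ := exists_mem_of_two_of_three (hgood a ha hsa) (hgood b hb hsb)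
  have hn : 0 < n := by
    simp only [mem_insert, mem_singleton] at hnN
    rcases hnN with rfl | rfl | rfl <;> positivity
  obtain ⟨a', ha'0, ha'1, ha'⟩ := exists_extension_of_sum_roundDown_le hn ha hna
  obtain ⟨b', hb'0, hb'1, hb'⟩ := exists_extension_of_sum_roundDown_le hn hb hnb
  exact ⟨n, hnN, k + 1, k.le_succ, a', b', ha'0, hb'0, ha'1, hb'1,
    fun i hi => ⟨(ha' i hi).ge, (hb' i hi).ge⟩⟩
end

section
/- Let n be a positive integer and m a positive integer. Let b_P, b_Q be real numbers with 0 ≤ b_P < 1 and 0 ≤ b_Q < 1, and let b_Q⁺ ≥ 0 be a real number. Set b_P⁺ := b_P + (b_Q⁺ − b_Q)·m and r := b_P + (1 − b_Q)·m. Assume that n·b_Q⁺ ∈ ℤ, that n·b_Q⁺ ≥ ⌊(n+1)·b_Q⌋, that n·r ∈ ℤ, and that r ≤ 1. Then ⌊(n+1)·b_P⌋ ≤ n·b_P⁺. -/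
/-- With `b_P⁺ = b_P + (b_Q⁺ − b_Q)·m` and `r = b_P + (1 − b_Q)·m`, if
`n·b_Q⁺ ∈ ℤ`, `n·b_Q⁺ ≥ ⌊(n+1)·b_Q⌋`, `n·r ∈ ℤ` and `r ≤ 1`, then
`⌊(n+1)·b_P⌋ ≤ n·b_P⁺`. -/
theorem stmt10 (n m : ℕ) (hn : 0 < n) (hm : 0 < m)
    (bP bQ bQp : ℝ) (hbP0 : 0 ≤ bP) (hbP1 : bP < 1) (hbQ0 : 0 ≤ bQ) (hbQ1 : bQ < 1)
    (hbQp : 0 ≤ bQp)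
    (hint1 : ∃ k : ℤ, (n : ℝ) * bQp = k)
    (hineq : (n : ℝ) * bQp ≥ (⌊((n : ℝ) + 1) * bQ⌋ : ℝ))
    (hint2 : ∃ k : ℤ, (n : ℝ) * (bP + (1 - bQ) * (m : ℝ)) = k)
    (hr : bP + (1 - bQ) * (m : ℝ) ≤ 1) :
    (⌊((n : ℝ) + 1) * bP⌋ : ℝ) ≤ (n : ℝ) * (bP + (bQp - bQ) * (m : ℝ)) := by
  obtain ⟨k1, hk1⟩ := hint1
  obtain ⟨k2, hk2⟩ := hint2
  have hrw : (n : ℝ) * (bP + (bQp - bQ) * (m : ℝ))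
      = ((k2 - (n : ℤ) * m + k1 * m : ℤ) : ℝ) := by
    push_cast
    nlinarith [hk1, hk2]
  rw [hrw]
  have hfl : ((n : ℝ) + 1) * bQ - 1 < (⌊((n : ℝ) + 1) * bQ⌋ : ℝ) :=
    Int.sub_one_lt_floor _
  have hk1b : ((n : ℝ) + 1) * bQ - 1 < (k1 : ℝ) := by
    rw [← hk1]; linarith
  have hm1 : (1 : ℝ) ≤ (m : ℝ) := by exact_mod_cast hm
  have hpos : 0 < (k1 : ℝ) + 1 - ((n : ℝ) + 1) * bQ := by linarith
  have key : ((n : ℝ) + 1) * bP < ((k2 - (n : ℤ) * m + k1 * m : ℤ) : ℝ) + 1 := by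
    push_cast
    nlinarith [mul_le_mul_of_nonneg_left hm1 hpos.le, hk2]
  exact_mod_cast (Int.floor_le_iff.mpr key)
end
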